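/- arXiv:1212.1094 — 9 statements merged into one kernel-verified Lean document; each statement's English description precedes it below -/
import Mathlib

section
/- Let P, P', A, A' be nonempty compact subsets of a normed space with D(P,P') < ε₁, D(A,A') < ε₂, and ε₁ + ε₂ < d(P,A). Then for every p ∈ P and a ∈ A there exist p' ∈ P' and a' ∈ A' such that ‖(a'−p')/‖a'−p'‖ − (a−p)/‖a−p‖‖ < 2(ε₁+ε₂)/d(P,A). -/
/-- The distance between two sets: the infimum of pairwise distances. -/
noncomputable def setDist {E : Type*} [NormedAddCommGroup E] (P A : Set E) : ℝ :=
  sInf (Set.image2 dist P A)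

lemma unit_diff_le {E : Type*} [NormedAddCommGroup E] [NormedSpace ℝ E]
    (u v : E) (hu : u ≠ 0) (hv : v ≠ 0) :
    ‖‖v‖⁻¹ • v - ‖u‖⁻¹ • u‖ ≤ 2 * ‖v - u‖ / ‖u‖ := by
  have ha : (0:ℝ) < ‖u‖ := norm_pos_iff.2 hu
  have hb : (0:ℝ) < ‖v‖ := norm_pos_iff.2 hv
  have key : ‖v‖⁻¹ • v - ‖u‖⁻¹ • u = ‖u‖⁻¹ • (v - u) + (‖v‖⁻¹ - ‖u‖⁻¹) • v := by
    rw [smul_sub, sub_smul]; abel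
  have habs : |‖v‖⁻¹ - ‖u‖⁻¹| * ‖v‖ = |‖u‖ - ‖v‖| / ‖u‖ := by
    have h1 : (‖v‖⁻¹ - ‖u‖⁻¹) * ‖v‖ = (‖u‖ - ‖v‖) / ‖u‖ := by field_simp
    calc |‖v‖⁻¹ - ‖u‖⁻¹| * ‖v‖ = |(‖v‖⁻¹ - ‖u‖⁻¹) * ‖v‖| := by
          rw [abs_mul, abs_of_pos hb]
      _ = |(‖u‖ - ‖v‖) / ‖u‖| := by rw [h1]
      _ = |‖u‖ - ‖v‖| / ‖u‖ := by rw [abs_div, abs_of_pos ha]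
  have hns : |‖u‖ - ‖v‖| ≤ ‖v - u‖ := by
    rw [show ‖v - u‖ = ‖u - v‖ from norm_sub_rev _ _]
    exact abs_norm_sub_norm_le u v
  calc ‖‖v‖⁻¹ • v - ‖u‖⁻¹ • u‖
      ≤ ‖‖u‖⁻¹ • (v - u)‖ + ‖(‖v‖⁻¹ - ‖u‖⁻¹) • v‖ := by rw [key]; exact norm_add_le _ _
    _ = ‖u‖⁻¹ * ‖v - u‖ + |‖v‖⁻¹ - ‖u‖⁻¹| * ‖v‖ := by
        rw [norm_smul, norm_smul, Real.norm_eq_abs, Real.norm_eq_abs,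
          abs_of_pos (inv_pos.2 ha)]
    _ ≤ ‖u‖⁻¹ * ‖v - u‖ + ‖v - u‖ / ‖u‖ := by
        rw [habs]; gcongr
    _ = 2 * ‖v - u‖ / ‖u‖ := by field_simp; ring

theorem directions_stability
    {E : Type*} [NormedAddCommGroup E] [NormedSpace ℝ E]
    (P P' A A' : Set E) (ε₁ ε₂ : ℝ)
    (hP : P.Nonempty) (hP' : P'.Nonempty) (hA : A.Nonempty) (hA' : A'.Nonempty)
    (hPc : IsCompact P) (hP'c : IsCompact P') (hAc : IsCompact A) (hA'c : IsCompact A')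
    (hPP' : Metric.hausdorffDist P P' < ε₁)
    (hAA' : Metric.hausdorffDist A A' < ε₂)
    (hsum : ε₁ + ε₂ < setDist P A) :
    ∀ p ∈ P, ∀ a ∈ A, ∃ p' ∈ P', ∃ a' ∈ A',
      ‖‖a' - p'‖⁻¹ • (a' - p') - ‖a - p‖⁻¹ • (a - p)‖
        < 2 * (ε₁ + ε₂) / setDist P A := by
  intro p hp a ha
  set d := setDist P A with hd
  -- positivity of d
  have hε₁ : 0 ≤ ε₁ := le_of_lt (lt_of_le_of_lt Metric.hausdorffDist_nonneg hPP')
  have hε₂ : 0 ≤ ε₂ := le_of_lt (lt_of_le_of_lt Metric.hausdorffDist_nonneg hAA')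
  have hεsum : 0 ≤ ε₁ + ε₂ := by linarith
  have hdpos : 0 < d := lt_of_le_of_lt hεsum hsum
  -- d ≤ ‖a - p‖
  have hdle : d ≤ ‖a - p‖ := by
    have hmem : dist p a ∈ Set.image2 dist P A := Set.mem_image2_of_mem hp ha
    have hbdd : BddBelow (Set.image2 dist P A) := by
      refine ⟨0, ?_⟩
      rintro x ⟨y, hy, z, hz, rfl⟩
      exact dist_nonneg
    have := csInf_le hbdd hmem
    rw [hd, setDist]
    calc sInf (Set.image2 dist P A) ≤ dist p a := this
      _ = ‖a - p‖ := by rw [dist_eq_norm, norm_sub_rev]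
  -- find p' and a'
  have hPne : EMetric.hausdorffEdist P P' ≠ ⊤ :=
    Metric.hausdorffEdist_ne_top_of_nonempty_of_bounded hP hP' hPc.isBounded hP'c.isBounded
  have hAne : EMetric.hausdorffEdist A A' ≠ ⊤ :=
    Metric.hausdorffEdist_ne_top_of_nonempty_of_bounded hA hA' hAc.isBounded hA'c.isBounded
  have h1 : Metric.infDist p P' < ε₁ :=
    lt_of_le_of_lt (Metric.infDist_le_hausdorffDist_of_mem hp hPne) hPP'
  have h2 : Metric.infDist a A' < ε₂ :=
    lt_of_le_of_lt (Metric.infDist_le_hausdorffDist_of_mem ha hAne) hAA'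
  obtain ⟨p', hp', hpp'⟩ := (Metric.infDist_lt_iff hP').mp h1
  obtain ⟨a', ha', haa'⟩ := (Metric.infDist_lt_iff hA').mp h2
  refine ⟨p', hp', a', ha', ?_⟩
  set u := a - p
  set v := a' - p'
  have hvu : ‖v - u‖ < ε₁ + ε₂ := by
    have : v - u = (a' - a) + (p - p') := by simp [u, v]; abel
    rw [this]
    calc ‖(a' - a) + (p - p')‖ ≤ ‖a' - a‖ + ‖p - p'‖ := norm_add_le _ _
      _ < ε₂ + ε₁ := by
          have e1 : ‖a' - a‖ = dist a a' := by rw [dist_eq_norm, norm_sub_rev]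
          have e2 : ‖p - p'‖ = dist p p' := by rw [dist_eq_norm]
          rw [e1, e2]; exact add_lt_add haa' hpp'
      _ = ε₁ + ε₂ := by ring
  have hu0 : u ≠ 0 := by
    intro h
    rw [h, norm_zero] at hdle
    linarith
  have hv0 : v ≠ 0 := by
    intro h
    rw [h, zero_sub, norm_neg] at hvu
    linarith
  have hupos : 0 < ‖u‖ := norm_pos_iff.2 hu0
  calc ‖‖v‖⁻¹ • v - ‖u‖⁻¹ • u‖ ≤ 2 * ‖v - u‖ / ‖u‖ := unit_diff_le u v hu0 hv0
    _ ≤ 2 * ‖v - u‖ / d := by gcongr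
    _ < 2 * (ε₁ + ε₂) / d := by
        apply (div_lt_div_iff_of_pos_right hdpos).mpr
        linarith
end

section
/- Let p, y, a be points in a normed space with a ≠ p, 0 < d(y,p) ≤ d(y,a). If x lies strictly between p and y (x ∈ (p,y)) and d(x,p) = d(x,a), then the vectors (x−a)/‖x−a‖ and (x−p)/‖x−p‖ are distinct, the segment joining them is contained in the unit sphere, and this segment is parallel to the segment [p,a] (i.e., the difference (x−a)/‖x−a‖ − (x−p)/‖x−p‖ is a positive scalar multiple of p−a). -/
private lemma aux_lower {E : Type*} [NormedAddCommGroup E] [NormedSpace ℝ E]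
    {u v : E} (h : ‖u + v‖ = ‖u‖ + ‖v‖) {α β : ℝ} (hα : 0 ≤ α) (hle : α ≤ β) :
    α * ‖u‖ + β * ‖v‖ ≤ ‖α • u + β • v‖ := by
  have key : β • (u + v) = (α • u + β • v) + (β - α) • u := by module
  have h2 : β * (‖u‖ + ‖v‖) ≤ ‖α • u + β • v‖ + (β - α) * ‖u‖ := by
    calc β * (‖u‖ + ‖v‖) = ‖β • (u + v)‖ := by
          rw [norm_smul, Real.norm_of_nonneg (le_trans hα hle), h]
      _ ≤ ‖α • u + β • v‖ + ‖(β - α) • u‖ := key ▸ norm_add_le _ _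
      _ = ‖α • u + β • v‖ + (β - α) * ‖u‖ := by
          rw [norm_smul, Real.norm_of_nonneg (by linarith)]
  nlinarith [norm_nonneg u, norm_nonneg v]

private lemma aux_eq {E : Type*} [NormedAddCommGroup E] [NormedSpace ℝ E]
    {u v : E} (h : ‖u + v‖ = ‖u‖ + ‖v‖) {α β : ℝ} (hα : 0 ≤ α) (hβ : 0 ≤ β) :
    ‖α • u + β • v‖ = α * ‖u‖ + β * ‖v‖ := by
  refine le_antisymm ?_ ?_
  · calc ‖α • u + β • v‖ ≤ ‖α • u‖ + ‖β • v‖ := norm_add_le _ _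
      _ = α * ‖u‖ + β * ‖v‖ := by
          rw [norm_smul, norm_smul, Real.norm_of_nonneg hα, Real.norm_of_nonneg hβ]
  · rcases le_total α β with hle | hle
    · exact aux_lower h hα hle
    · have := aux_lower (u := v) (v := u) (by rw [add_comm, add_comm ‖v‖]; exact h) hβ hle
      rw [add_comm (α • u), add_comm (α * ‖u‖)]
      exact this

theorem parallel_unit_sphere_segment
    {E : Type*} [NormedAddCommGroup E] [NormedSpace ℝ E]
    (p y a x : E) (hap : a ≠ p)
    (hyp : 0 < dist y p) (hya : dist y p ≤ dist y a)
    (hx : ∃ t ∈ Set.Ioo (0 : ℝ) 1, x = p + t • (y - p))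
    (heq : dist x p = dist x a) :
    ‖x - a‖⁻¹ • (x - a) ≠ ‖x - p‖⁻¹ • (x - p) ∧
    segment ℝ (‖x - a‖⁻¹ • (x - a)) (‖x - p‖⁻¹ • (x - p)) ⊆ Metric.sphere (0 : E) 1 ∧
    ∃ c : ℝ, 0 < c ∧
      ‖x - a‖⁻¹ • (x - a) - ‖x - p‖⁻¹ • (x - p) = c • (p - a) := by
  obtain ⟨t, ⟨ht0, ht1⟩, hxt⟩ := hx
  have hxp : x - p = t • (y - p) := by rw [hxt]; abel
  have hypn : 0 < ‖y - p‖ := by rwa [dist_eq_norm] at hyp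
  have hr : 0 < ‖x - p‖ := by
    rw [hxp, norm_smul, Real.norm_of_nonneg ht0.le]
    positivity
  have hxa : ‖x - a‖ = ‖x - p‖ := by
    rw [dist_eq_norm, dist_eq_norm] at heq; exact heq.symm
  set lam : ℝ := (1 - t) / t with hlam_def
  have hlam : 0 < lam := div_pos (by linarith) ht0
  have hyx : y - x = lam • (x - p) := by
    rw [hxp, smul_smul, hlam_def, div_mul_cancel₀ _ (ne_of_gt ht0), hxt]
    match_scalars <;> ring
  have hyp_eq : y - p = (lam + 1) • (x - p) := by
    have : y - p = (y - x) + (x - p) := by abel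
    rw [this, hyx]; module
  -- triangle equality
  have hkey : ‖lam • (x - p) + (x - a)‖ = ‖lam • (x - p)‖ + ‖x - a‖ := by
    refine le_antisymm (norm_add_le _ _) ?_
    have h1 : lam • (x - p) + (x - a) = y - a := by rw [← hyx]; abel
    have h2 : ‖y - a‖ ≥ ‖y - p‖ := by
      rw [dist_eq_norm, dist_eq_norm] at hya; exact hya
    rw [h1, norm_smul, Real.norm_of_nonneg hlam.le, hxa]
    calc lam * ‖x - p‖ + ‖x - p‖ = (lam + 1) * ‖x - p‖ := by ring
      _ = ‖y - p‖ := by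
          rw [hyp_eq, norm_smul, Real.norm_of_nonneg (by linarith)]
      _ ≤ ‖y - a‖ := h2
  -- general combination norm
  have hcomb : ∀ α β : ℝ, 0 ≤ α → 0 ≤ β →
      ‖α • (x - a) + β • (x - p)‖ = (α + β) * ‖x - p‖ := by
    intro α β hα hβ
    have hrw : α • (x - a) + β • (x - p)
        = α • (x - a) + (β / lam) • (lam • (x - p)) := by
      rw [smul_smul, div_mul_cancel₀ _ (ne_of_gt hlam)]
    have := aux_eq (u := x - a) (v := lam • (x - p))
      (by rw [add_comm (x - a), hkey, add_comm])
      hα (div_nonneg hβ hlam.le)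
    rw [hrw, this, norm_smul, Real.norm_of_nonneg hlam.le, hxa]
    field_simp
  have hrne : ‖x - p‖ ≠ 0 := ne_of_gt hr
  refine ⟨?_, ?_, ?_⟩
  · intro h
    apply hap
    rw [hxa] at h
    have := smul_right_injective E (inv_ne_zero hrne) h
    have : a = p := by
      have h3 : x - a = x - p := this
      exact sub_right_injective h3
    exact this
  · rintro z ⟨α, β, hα, hβ, hab, rfl⟩
    simp only [Metric.mem_sphere, dist_zero_right]
    have h1 : α • (‖x - a‖⁻¹ • (x - a)) + β • (‖x - p‖⁻¹ • (x - p))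
        = (α * ‖x - p‖⁻¹) • (x - a) + (β * ‖x - p‖⁻¹) • (x - p) := by
      rw [hxa, smul_smul, smul_smul]
    rw [h1, hcomb _ _ (by positivity) (by positivity)]
    field_simp
    linarith
  · refine ⟨‖x - p‖⁻¹, inv_pos.mpr hr, ?_⟩
    rw [hxa, ← smul_sub]
    congr 1
    abel
end

section
/- Let p, y be points in a normed space and A a nonempty subset such that p ∉ A, the distance d(x,A) is attained for every x ∈ [p,y), d(y,p) ≤ d(y,A), and for every a ∈ A the segment [p,a] is not parallel to any nondegenerate segment contained in the unit sphere. Then d(x,p) < d(x,A) for all x ∈ [p,y). -/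
/-!
Suppose `d(x, A) ≤ d(x, p)` for some `x ∈ [p, y)`, attained at `a ∈ A`. Since `x` lies between
`p` and `y` and `d(y, p) ≤ d(y, a)`, the triangle inequality through `x` forces
`‖x - a‖ = ‖x - p‖` and `‖y - a‖ = ‖y - x‖ + ‖x - a‖`. A norming functional of `y - a` then equals
`1` at both unit vectors of `y - x` and `x - a`, so the segment joining them lies in the unit
sphere; and since `y - x` points along `x - p`, their difference is a positive multiple of
`p - a`.
-/

open Metric

theorem dist_eq_of_dist_le_of_dist_add_dist_eq {α : Type*} [PseudoMetricSpace α] {p x y a : α}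
    (hx : dist p x + dist x y = dist p y) (hxa : dist x a ≤ dist x p)
    (hya : dist y p ≤ dist y a) : dist x a = dist x p ∧ dist y a = dist y x + dist x a := by
  have := dist_triangle y x a
  rw [dist_comm p x, dist_comm x y, dist_comm p y] at hx
  constructor <;> linarith

section
variable {E : Type*} [NormedAddCommGroup E] [NormedSpace ℝ E]

theorem segment_subset_sphere_of_dual_eq_one {g : StrongDual ℝ E} (hg : ‖g‖ ≤ 1) {x y : E}
    (hx : x ∈ closedBall (0 : E) 1) (hy : y ∈ closedBall (0 : E) 1) (hgx : g x = 1)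
    (hgy : g y = 1) : segment ℝ x y ⊆ sphere (0 : E) 1 := by
  have hconv : Convex ℝ (closedBall (0 : E) 1 ∩ {z | g z = 1}) :=
    (convex_closedBall 0 1).inter (convex_hyperplane g.toLinearMap.isLinear 1)
  intro z hz
  obtain ⟨hz1, hgz⟩ := hconv.segment_subset ⟨hx, hgx⟩ ⟨hy, hgy⟩ hz
  rw [mem_closedBall_zero_iff] at hz1
  have : 1 ≤ ‖z‖ :=
    calc (1 : ℝ) = g z := hgz.symm
      _ ≤ ‖g z‖ := Real.le_norm_self _
      _ ≤ ‖g‖ * ‖z‖ := g.le_opNorm z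
      _ ≤ ‖z‖ := mul_le_of_le_one_left (norm_nonneg z) hg
  exact mem_sphere_zero_iff_norm.mpr (le_antisymm hz1 this)

theorem segment_inv_norm_smul_subset_sphere_of_norm_add_eq {u v : E} (hu : u ≠ 0) (hv : v ≠ 0)
    (h : ‖u + v‖ = ‖u‖ + ‖v‖) :
    segment ℝ (‖u‖⁻¹ • u) (‖v‖⁻¹ • v) ⊆ sphere (0 : E) 1 := by
  obtain ⟨g, hg, hguv⟩ := exists_dual_vector ℝ (u + v) (by rw [h]; positivity)
  simp only [map_add, h, RCLike.ofReal_real_eq_id, id] at hguv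
  have hle (w : E) : g w ≤ ‖w‖ :=
    (Real.le_norm_self _).trans ((g.le_opNorm w).trans_eq (by rw [hg, one_mul]))
  have hgu : g u = ‖u‖ := by linarith [hle u, hle v]
  have hgv : g v = ‖v‖ := by linarith [hle u, hle v]
  refine segment_subset_sphere_of_dual_eq_one hg.le (inv_norm_smul_mem_unitClosedBall u)
    (inv_norm_smul_mem_unitClosedBall v) ?_ ?_
  · rw [map_smul, hgu, smul_eq_mul, inv_mul_cancel₀ (norm_ne_zero_iff.mpr hu)]
  · rw [map_smul, hgv, smul_eq_mul, inv_mul_cancel₀ (norm_ne_zero_iff.mpr hv)]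

theorem exists_segment_subset_sphere_parallel {p x y a : E} (hx : x ∈ segment ℝ p y)
    (hxp : x ≠ p) (hyx : y ≠ x) (hap : a ≠ p) (hxa : ‖x - a‖ = ‖x - p‖)
    (hya : ‖y - a‖ = ‖y - x‖ + ‖x - a‖) :
    ∃ u v : E, u ≠ v ∧ segment ℝ u v ⊆ sphere (0 : E) 1 ∧
      ‖a - p‖⁻¹ • (a - p) = -(‖v - u‖⁻¹ • (v - u)) := by
  have hxa0 : x - a ≠ 0 := norm_ne_zero_iff.mp (hxa ▸ norm_ne_zero_iff.mpr (sub_ne_zero.mpr hxp))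
  have hsame : ‖y - x‖⁻¹ • (y - x) = ‖x - p‖⁻¹ • (x - p) :=
    ((mem_segment_iff_sameRay.mp hx).symm).inv_norm_smul_eq (sub_ne_zero.mpr hyx)
      (sub_ne_zero.mpr hxp)
  have hc : 0 < ‖x - p‖⁻¹ := inv_pos.mpr (norm_pos_iff.mpr (sub_ne_zero.mpr hxp))
  have hdiff : ‖x - a‖⁻¹ • (x - a) - ‖y - x‖⁻¹ • (y - x) = ‖x - p‖⁻¹ • (p - a) := by
    rw [hsame, hxa, ← smul_sub, sub_sub_sub_cancel_left]
  refine ⟨_, _, ?_, segment_inv_norm_smul_subset_sphere_of_norm_add_eq (sub_ne_zero.mpr hyx) hxa0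
    (by rwa [sub_add_sub_cancel]), ?_⟩
  · rw [ne_comm, ← sub_ne_zero, hdiff]
    exact smul_ne_zero hc.ne' (sub_ne_zero.mpr hap.symm)
  · rw [hdiff, ((SameRay.sameRay_pos_smul_right (p - a) hc).inv_norm_smul_eq
      (sub_ne_zero.mpr hap.symm) (smul_ne_zero hc.ne' (sub_ne_zero.mpr hap.symm))).symm,
      ← neg_sub a p, norm_neg, smul_neg, neg_neg]

end

theorem strict_inequality_on_half_open_segment_general
    {E : Type*} [NormedAddCommGroup E] [NormedSpace ℝ E]
    (p y : E) (A : Set E) (hpA : p ∉ A)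
    (hattain : ∀ t ∈ Set.Ico (0 : ℝ) 1, ∃ a ∈ A,
      Metric.infDist (p + t • (y - p)) A = dist (p + t • (y - p)) a)
    (hyp : dist y p ≤ Metric.infDist y A)
    (hpar : ∀ a ∈ A, a ≠ p →
      ¬ ∃ u v : E, u ≠ v ∧ segment ℝ u v ⊆ Metric.sphere (0 : E) 1 ∧
        (‖a - p‖⁻¹ • (a - p) = ‖v - u‖⁻¹ • (v - u) ∨
         ‖a - p‖⁻¹ • (a - p) = -(‖v - u‖⁻¹ • (v - u)))) :
    ∀ t ∈ Set.Ico (0 : ℝ) 1,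
      dist (p + t • (y - p)) p < Metric.infDist (p + t • (y - p)) A := by
  intro t ht
  set x := p + t • (y - p) with hx_def
  by_contra! hle
  obtain ⟨a, haA, hxa⟩ := hattain t ht
  have hap : a ≠ p := ne_of_mem_of_not_mem haA hpA
  have hx : x ∈ segment ℝ p y := ⟨1 - t, t, by linarith [ht.2], ht.1, by ring, by module⟩
  obtain ⟨hxa, hya⟩ := dist_eq_of_dist_le_of_dist_add_dist_eq (dist_add_dist_of_mem_segment hx)
    (hxa ▸ hle) (hyp.trans (infDist_le_dist_of_mem haA))
  have hxp : x ≠ p := fun h =>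
    hap ((dist_eq_zero.mp (hxa.trans (dist_eq_zero.mpr h))).symm.trans h)
  have hyx : y ≠ x := by
    have hyp0 : y - p ≠ 0 := fun h => hxp (by rw [hx_def, h, smul_zero, add_zero])
    rw [← sub_ne_zero, show y - x = (1 - t) • (y - p) by rw [hx_def]; module]
    exact smul_ne_zero (by linarith [ht.2]) hyp0
  simp only [dist_eq_norm] at hxa hya
  obtain ⟨u, v, huv, hseg, hdir⟩ := exists_segment_subset_sphere_parallel hx hxp hyx hap hxa hya
  exact hpar a haA hap ⟨u, v, huv, hseg, Or.inr hdir⟩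

theorem strict_inequality_on_half_open_segment
    {E : Type*} [NormedAddCommGroup E] [NormedSpace ℝ E]
    (p y : E) (A : Set E) (hA : A.Nonempty) (hpA : p ∉ A)
    (hattain : ∀ t ∈ Set.Ico (0 : ℝ) 1, ∃ a ∈ A,
      Metric.infDist (p + t • (y - p)) A = dist (p + t • (y - p)) a)
    (hyp : dist y p ≤ Metric.infDist y A)
    (hpar : ∀ a ∈ A, a ≠ p →
      ¬ ∃ u v : E, u ≠ v ∧ segment ℝ u v ⊆ Metric.sphere (0 : E) 1 ∧
        (‖a - p‖⁻¹ • (a - p) = ‖v - u‖⁻¹ • (v - u) ∨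
         ‖a - p‖⁻¹ • (a - p) = -(‖v - u‖⁻¹ • (v - u)))) :
    ∀ t ∈ Set.Ico (0 : ℝ) 1,
      dist (p + t • (y - p)) p < Metric.infDist (p + t • (y - p)) A :=
  strict_inequality_on_half_open_segment_general p y A hpA hattain hyp hpar
end

section
/- Let X be a convex subset of a normed space and P, A nonempty disjoint subsets of X such that for every x ∈ X the distances d(x,P) and d(x,A) are attained, and no segment [p,a] with p ∈ P, a ∈ A is parallel to a nondegenerate segment contained in the unit sphere. Then the dominance region dom(P,A) = {x ∈ X : d(x,P) ≤ d(x,A)} equals the closure (in X) of {x ∈ X : d(x,P) < d(x,A)}. -/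
/-!
Let `d(x,P) = d(x,A) = r` and let `p ∈ P` be a nearest point to `x`. Every point `z` strictly
between `x` and `p` lies in the strict region, and these points accumulate at `x`. Indeed, if
`d(z,A) ≤ d(z,P)`, a nearest point `a ∈ A` to `z` satisfies `‖z - a‖ ≤ ‖z - p‖`, so the triangle
inequality `r ≤ ‖x - a‖ ≤ ‖x - z‖ + ‖z - a‖ ≤ r` is an equality. Equality in the triangle
inequality puts the segment between the directions of `x - z` and `z - a` on the unit sphere.
As `z - p` points in the direction of `x - z` and `‖z - a‖ = ‖z - p‖`, the vector
`a - p = (z - p) - (z - a)` is a positive multiple of the difference of these two directions,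
contradicting the hypothesis.
-/

open Metric NormedSpace Set

section

variable {E : Type*} [NormedAddCommGroup E] [NormedSpace ℝ E]

theorem segment_subset_sphere_of_mem_openSegment {u v w : E} (hu : ‖u‖ = 1) (hv : ‖v‖ = 1)
    (hw : w ∈ openSegment ℝ u v) (hw1 : ‖w‖ = 1) : segment ℝ u v ⊆ sphere 0 1 := by
  rw [openSegment_eq_image_lineMap] at hw
  obtain ⟨t, ⟨ht0, ht1⟩, rfl⟩ := hw
  rw [segment_eq_image_lineMap]
  rintro _ ⟨s, ⟨hs0, hs1⟩, rfl⟩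
  have hg : ConvexOn ℝ univ fun s : ℝ ↦ ‖AffineMap.lineMap u v s‖ :=
    (convexOn_norm convex_univ).comp_affineMap (AffineMap.lineMap u v)
  rw [mem_sphere_zero_iff_norm]
  refine le_antisymm ?_ ?_
  · calc ‖AffineMap.lineMap u v s‖ ≤ max ‖u‖ ‖v‖ :=
          (convexOn_norm convex_univ).le_on_segment trivial trivial
            (lineMap_mem_segment ℝ u v ⟨hs0, hs1⟩)
      _ = 1 := by rw [hu, hv, max_self]
  · rw [← hw1]
    rcases le_or_gt s t with hst | hts
    · exact hg.le_left_of_right_le'' trivial trivial hst ht1 (by simpa [hv] using hw1.ge)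
    · exact hg.le_right_of_left_le'' trivial trivial ht0 hts.le (by simpa [hu] using hw1.ge)

theorem segment_normalize_subset_sphere_of_norm_add_eq {w₁ w₂ : E} (h₁ : w₁ ≠ 0) (h₂ : w₂ ≠ 0)
    (h : ‖w₁ + w₂‖ = ‖w₁‖ + ‖w₂‖) : segment ℝ (normalize w₁) (normalize w₂) ⊆ sphere 0 1 := by
  have hs : 0 < ‖w₁‖ + ‖w₂‖ := by positivity
  refine segment_subset_sphere_of_mem_openSegment (norm_normalize_eq_one_iff.2 h₁)
    (norm_normalize_eq_one_iff.2 h₂) ?_ (norm_normalize_eq_one_iff.2 (norm_pos_iff.1 (h ▸ hs)))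
  refine ⟨‖w₁‖ / (‖w₁‖ + ‖w₂‖), ‖w₂‖ / (‖w₁‖ + ‖w₂‖), by positivity, by positivity, by
    field_simp, ?_⟩
  rw [show normalize (w₁ + w₂) = ‖w₁ + w₂‖⁻¹ • (w₁ + w₂) from rfl, h, div_eq_inv_mul,
    div_eq_inv_mul, mul_smul, mul_smul, norm_smul_normalize, norm_smul_normalize, smul_add]

theorem exists_sphere_segment_antiparallel_of_mem_openSegment {x z p a : E}
    (hz : z ∈ openSegment ℝ x p) (hxp : ‖x - p‖ ≤ ‖x - a‖) (hza : ‖z - a‖ ≤ ‖z - p‖)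
    (hap : a ≠ p) :
    ∃ u v : E, u ≠ v ∧ segment ℝ u v ⊆ sphere 0 1 ∧ normalize (a - p) = -normalize (v - u) := by
  obtain ⟨α, β, hα, hβ, hαβ, rfl⟩ := hz
  obtain rfl : α = 1 - β := by linarith
  set z := (1 - β) • x + β • p
  have hxz : x - z = β • (x - p) := by module
  have hzp : z - p = (1 - β) • (x - p) := by module
  have hw : x - p ≠ 0 := by
    rintro hw
    have hzp0 : z = p := sub_eq_zero.1 (by rw [hzp, hw, smul_zero])
    rw [hzp0, sub_self, norm_zero, norm_le_zero_iff, sub_eq_zero] at hza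
    exact hap hza.symm
  have hxz_norm : ‖x - z‖ = β * ‖x - p‖ := by
    rw [hxz, norm_smul, Real.norm_of_nonneg hβ.le]
  rw [hzp, norm_smul, Real.norm_of_nonneg hα.le] at hza
  have htri : ‖x - a‖ ≤ ‖x - z‖ + ‖z - a‖ := norm_sub_le_norm_sub_add_norm_sub x z a
  have hza_eq : ‖z - a‖ = (1 - β) * ‖x - p‖ := by linarith
  have hadd : ‖(x - z) + (z - a)‖ = ‖x - z‖ + ‖z - a‖ := by
    rw [sub_add_sub_cancel]
    linarith
  have hc : 0 < (1 - β) * ‖x - p‖ := by positivity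
  have hza0 : z - a ≠ 0 := norm_pos_iff.1 (hza_eq ▸ hc)
  have hseg := segment_normalize_subset_sphere_of_norm_add_eq
    (hxz ▸ smul_ne_zero hβ.ne' hw) hza0 hadd
  rw [hxz, normalize_smul_of_pos hβ] at hseg
  have hap_eq : a - p = ((1 - β) * ‖x - p‖) • (normalize (x - p) - normalize (z - a)) := by
    rw [smul_sub, mul_smul, norm_smul_normalize, ← hza_eq, norm_smul_normalize, ← hzp]
    abel
  refine ⟨normalize (x - p), normalize (z - a), fun huv ↦ hap ?_, hseg, ?_⟩
  · rwa [huv, sub_self, smul_zero, sub_eq_zero] at hap_eq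
  · rw [hap_eq, normalize_smul_of_pos hc, ← neg_sub, normalize_neg]

end

theorem dom_eq_closure_of_strict_general
    {E : Type*} [NormedAddCommGroup E] [NormedSpace ℝ E]
    (X P A : Set E) (hX : Convex ℝ X) (hPX : P ⊆ X)
    (hdisj : P ∩ A = ∅)
    (hattP : ∀ x ∈ X, ∃ p ∈ P, Metric.infDist x P = dist x p)
    (hattA : ∀ x ∈ X, ∃ a ∈ A, Metric.infDist x A = dist x a)
    (hpar : ∀ p ∈ P, ∀ a ∈ A, p ≠ a →
      ¬ ∃ u v : E, u ≠ v ∧ segment ℝ u v ⊆ Metric.sphere (0 : E) 1 ∧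
        (‖a - p‖⁻¹ • (a - p) = ‖v - u‖⁻¹ • (v - u) ∨
         ‖a - p‖⁻¹ • (a - p) = -(‖v - u‖⁻¹ • (v - u)))) :
    {x ∈ X | Metric.infDist x P ≤ Metric.infDist x A} =
      closure {x ∈ X | Metric.infDist x P < Metric.infDist x A} ∩ X := by
  refine Subset.antisymm (fun x ⟨hxX, hle⟩ ↦ ⟨?_, hxX⟩) fun x ⟨hx, hxX⟩ ↦ ⟨hxX, ?_⟩
  · rcases hle.lt_or_eq with hlt | heq
    · exact subset_closure ⟨hxX, hlt⟩
    obtain ⟨p, hp, hxp⟩ := hattP x hxX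
    suffices openSegment ℝ x p ⊆ {y ∈ X | infDist y P < infDist y A} from
      closure_mono this (segment_subset_closure_openSegment (left_mem_segment ℝ x p))
    intro z hz
    have hzX : z ∈ X := hX.openSegment_subset hxX (hPX hp) hz
    refine ⟨hzX, lt_of_not_ge fun hzA ↦ ?_⟩
    obtain ⟨a, ha, hza⟩ := hattA z hzX
    have hpa : p ≠ a := (disjoint_iff_inter_eq_empty.2 hdisj).ne_of_mem hp ha
    obtain ⟨u, v, huv, hseg, hdir⟩ := exists_sphere_segment_antiparallel_of_mem_openSegment hz
      (by simpa only [← dist_eq_norm, ← hxp, heq] using infDist_le_dist_of_mem ha)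
      (by simpa only [← dist_eq_norm, ← hza] using hzA.trans (infDist_le_dist_of_mem hp)) hpa.symm
    exact hpar p hp a ha hpa ⟨u, v, huv, hseg, Or.inr hdir⟩
  · exact closure_minimal (fun y hy ↦ hy.2.le)
      (isClosed_le (continuous_infDist_pt P) (continuous_infDist_pt A)) hx

theorem dom_eq_closure_of_strict
    {E : Type*} [NormedAddCommGroup E] [NormedSpace ℝ E]
    (X P A : Set E) (hX : Convex ℝ X) (hPX : P ⊆ X) (hAX : A ⊆ X)
    (hP : P.Nonempty) (hA : A.Nonempty) (hdisj : P ∩ A = ∅)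
    (hattP : ∀ x ∈ X, ∃ p ∈ P, Metric.infDist x P = dist x p)
    (hattA : ∀ x ∈ X, ∃ a ∈ A, Metric.infDist x A = dist x a)
    (hpar : ∀ p ∈ P, ∀ a ∈ A, p ≠ a →
      ¬ ∃ u v : E, u ≠ v ∧ segment ℝ u v ⊆ Metric.sphere (0 : E) 1 ∧
        (‖a - p‖⁻¹ • (a - p) = ‖v - u‖⁻¹ • (v - u) ∨
         ‖a - p‖⁻¹ • (a - p) = -(‖v - u‖⁻¹ • (v - u)))) :
    {x ∈ X | Metric.infDist x P ≤ Metric.infDist x A} =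
      closure {x ∈ X | Metric.infDist x P < Metric.infDist x A} ∩ X :=
  dom_eq_closure_of_strict_general X P A hX hPX hdisj hattP hattA hpar
end

section
/- Let X be a convex subset of a normed space and P, A nonempty disjoint subsets of X such that for every x ∈ X the distances d(x,P) and d(x,A) are attained, and no segment [p,a] with p ∈ P, a ∈ A is parallel to a nondegenerate segment contained in the unit sphere. Then the boundary of dom(P,A) relative to X equals the bisector {x ∈ X : d(x,P) = d(x,A)}, and the interior of dom(P,A) relative to X equals {x ∈ X : d(x,P) < d(x,A)}. -/
/-!
Let `x ∈ X` lie on the bisector, at distance `r > 0` from both `P` and a nearest point `a ∈ A`.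
If the points `y` of the open segment `(x, a)` were all in `dom(P, A)`, a nearest point `p ∈ P`
to `y` would satisfy `‖x - p‖ = ‖x - y‖ + ‖y - p‖`, so the unit vectors in the directions
`x - y` and `y - p` span a segment of the unit sphere, and that segment is parallel to `a - p`.
Hence points of `X` arbitrarily close to `x` lie outside `dom(P, A)`, so the bisector is
contained in the boundary; the reverse inclusions follow from continuity of the distances.
-/

open Set Filter Topology Metric AffineMap

section TopologyOfSublevelSets

variable {α β : Type*} [TopologicalSpace α] [LinearOrder β] [TopologicalSpace β]
  [OrderClosedTopology β] {f g : α → β}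

theorem frontier_setOf_le_eq_of_subset_closure (hf : Continuous f) (hg : Continuous g)
    (h : {x | f x = g x} ⊆ closure {x | g x < f x}) :
    frontier {x | f x ≤ g x} = {x | f x = g x} := by
  refine (frontier_le_subset_eq hf hg).antisymm fun x hx => ?_
  rw [frontier_eq_closure_inter_closure]
  refine ⟨subset_closure (le_of_eq hx), ?_⟩
  simpa only [compl_ofPred, not_le] using h hx

theorem interior_setOf_le_eq_of_subset_closure (hf : Continuous f) (hg : Continuous g)
    (h : {x | f x = g x} ⊆ closure {x | g x < f x}) :
    interior {x | f x ≤ g x} = {x | f x < g x} := by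
  rw [← self_sdiff_frontier, frontier_setOf_le_eq_of_subset_closure hf hg h]
  ext x
  simp only [Set.mem_sdiff, mem_ofPred_eq, lt_iff_le_and_ne]

end TopologyOfSublevelSets

section NormedSpace

variable {E : Type*} [NormedAddCommGroup E] [NormedSpace ℝ E]

def IsParallelToSphereSegment (d : E) : Prop :=
  ∃ u v : E, u ≠ v ∧ segment ℝ u v ⊆ sphere (0 : E) 1 ∧
    (NormedSpace.normalize d = NormedSpace.normalize (v - u) ∨
      NormedSpace.normalize d = -NormedSpace.normalize (v - u))

theorem norm_smul_add_smul_of_norm_add_eq {a b : E} (h : ‖a + b‖ = ‖a‖ + ‖b‖) {s t : ℝ}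
    (hs : 0 ≤ s) (ht : 0 ≤ t) : ‖s • a + t • b‖ = s * ‖a‖ + t * ‖b‖ := by
  wlog hts : t ≤ s generalizing a b s t
  · rw [add_comm, this (by rwa [add_comm, add_comm ‖b‖]) ht hs (le_of_not_ge hts), add_comm]
  refine le_antisymm ((norm_add_le _ _).trans_eq ?_) ?_
  · rw [norm_smul_of_nonneg hs, norm_smul_of_nonneg ht]
  calc s * ‖a‖ + t * ‖b‖ = ‖s • (a + b)‖ - ‖(s - t) • b‖ := by
        rw [norm_smul_of_nonneg hs, norm_smul_of_nonneg (sub_nonneg.2 hts), h]; ring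
    _ ≤ ‖s • (a + b) - (s - t) • b‖ := norm_sub_norm_le _ _
    _ = ‖s • a + t • b‖ := by congr 1; module

theorem segment_normalize_subset_sphere_of_norm_add_eq_s10 {a b : E} (ha : a ≠ 0) (hb : b ≠ 0)
    (h : ‖a + b‖ = ‖a‖ + ‖b‖) :
    segment ℝ (NormedSpace.normalize a) (NormedSpace.normalize b) ⊆ sphere (0 : E) 1 := by
  rintro _ ⟨s, t, hs, ht, hst, rfl⟩
  have ha' : ‖a‖ ≠ 0 := norm_ne_zero_iff.2 ha
  have hb' : ‖b‖ ≠ 0 := norm_ne_zero_iff.2 hb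
  rw [mem_sphere_zero_iff_norm, NormedSpace.normalize, NormedSpace.normalize, smul_smul,
    smul_smul, norm_smul_add_smul_of_norm_add_eq h (by positivity) (by positivity)]
  field_simp
  exact hst

theorem isParallelToSphereSegment_sub_of_dist_le {x a p : E} {t : ℝ} (ht₀ : 0 < t) (ht₁ : t < 1)
    (hx : dist x a ≤ dist x p) (hy : dist (lineMap x a t) p ≤ dist (lineMap x a t) a)
    (hpa : p ≠ a) : IsParallelToSphereSegment (a - p) := by
  set y := lineMap x a t
  set r := dist x a
  have hxy : x - y = t • (x - a) := by simp only [y, lineMap_apply_module]; module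
  have hya : dist y a = (1 - t) * r := by
    rw [dist_lineMap_right, Real.norm_of_nonneg (by linarith)]
  have hxy_norm : ‖x - y‖ = t * r := by
    rw [hxy, norm_smul_of_nonneg ht₀.le, ← dist_eq_norm]
  have hr : 0 < r := dist_pos.2 fun hxa => hpa <| by
    subst hxa
    exact (dist_le_zero.1 (by simpa [y] using hy)).symm
  have hcoef : 0 < (1 - t) * r := mul_pos (by linarith) hr
  have hxp : dist x p = r := by
    have := dist_triangle x y p
    rw [dist_eq_norm x y, hxy_norm] at this
    linarith
  have hyp_norm : ‖y - p‖ = (1 - t) * r := by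
    have := dist_triangle x y p
    rw [dist_eq_norm x y, hxy_norm, hxp] at this
    rw [← dist_eq_norm]
    linarith
  have hsum : ‖(x - y) + (y - p)‖ = ‖x - y‖ + ‖y - p‖ := by
    rw [sub_add_sub_cancel, ← dist_eq_norm, hxp, hxy_norm, hyp_norm]; ring
  have hdir : a - p = ((1 - t) * r) •
      (NormedSpace.normalize (y - p) - NormedSpace.normalize (x - y)) := by
    rw [NormedSpace.normalize, NormedSpace.normalize, hyp_norm, hxy_norm, smul_sub, smul_smul,
      smul_smul, hxy, smul_smul, mul_inv_cancel₀ hcoef.ne',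
      show (1 - t) * r * (t * r)⁻¹ * t = 1 - t by field_simp]
    simp only [y, lineMap_apply_module]
    module
  refine ⟨NormedSpace.normalize (x - y), NormedSpace.normalize (y - p), fun h => hpa ?_,
    segment_normalize_subset_sphere_of_norm_add_eq_s10 ?_ ?_ hsum, Or.inl ?_⟩
  · rw [h, sub_self, smul_zero, sub_eq_zero] at hdir
    exact hdir.symm
  · rw [← norm_pos_iff, hxy_norm]; positivity
  · rw [← norm_pos_iff, hyp_norm]; exact hcoef
  · rw [hdir, NormedSpace.normalize_smul_of_pos hcoef]

variable {X P A : Set E}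

theorem infDist_lineMap_lt_infDist (hX : Convex ℝ X) (hAX : A ⊆ X) (hdisj : Disjoint P A)
    (hattP : ∀ x ∈ X, ∃ p ∈ P, infDist x P = dist x p)
    (hpar : ∀ p ∈ P, ∀ a ∈ A, p ≠ a → ¬ IsParallelToSphereSegment (a - p))
    {x a : E} (hx : x ∈ X) (ha : a ∈ A) (hxa : dist x a ≤ infDist x P) {t : ℝ}
    (ht : t ∈ Ioo 0 1) : infDist (lineMap x a t) A < infDist (lineMap x a t) P := by
  by_contra! h
  obtain ⟨p, hp, hyp⟩ := hattP _ (hX.lineMap_mem hx (hAX ha) (Ioo_subset_Icc_self ht))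
  have hpa : p ≠ a := hdisj.ne_of_mem hp ha
  exact hpar p hp a ha hpa <| isParallelToSphereSegment_sub_of_dist_le ht.1 ht.2
    (hxa.trans (infDist_le_dist_of_mem hp)) (hyp ▸ h.trans (infDist_le_dist_of_mem ha)) hpa

theorem setOf_infDist_eq_subset_closure_setOf_infDist_lt (hX : Convex ℝ X) (hAX : A ⊆ X)
    (hdisj : Disjoint P A) (hattP : ∀ x ∈ X, ∃ p ∈ P, infDist x P = dist x p)
    (hattA : ∀ x ∈ X, ∃ a ∈ A, infDist x A = dist x a)
    (hpar : ∀ p ∈ P, ∀ a ∈ A, p ≠ a → ¬ IsParallelToSphereSegment (a - p)) :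
    {x : X | infDist (x : E) P = infDist (x : E) A} ⊆
      closure {x : X | infDist (x : E) A < infDist (x : E) P} := by
  intro x (hx : infDist (x : E) P = infDist (x : E) A)
  obtain ⟨a, ha, hxa⟩ := hattA x x.2
  have hlim : Tendsto (lineMap (x : E) a) (𝓝[>] (0 : ℝ)) (𝓝 x) := by
    simpa only [lineMap_apply_zero] using
      (lineMap_continuous.tendsto (0 : ℝ)).mono_left nhdsWithin_le_nhds
  rw [closure_subtype]
  refine mem_closure_of_tendsto hlim ?_
  filter_upwards [Ioo_mem_nhdsGT zero_lt_one] with t ht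
  exact ⟨⟨_, hX.lineMap_mem x.2 (hAX ha) (Ioo_subset_Icc_self ht)⟩,
    infDist_lineMap_lt_infDist hX hAX hdisj hattP hpar x.2 ha (hx.trans hxa).ge ht, rfl⟩

end NormedSpace

theorem frontier_and_interior_of_dom_general
    {E : Type*} [NormedAddCommGroup E] [NormedSpace ℝ E]
    (X P A : Set E) (hX : Convex ℝ X) (hAX : A ⊆ X)
    (hdisj : P ∩ A = ∅)
    (hattP : ∀ x ∈ X, ∃ p ∈ P, Metric.infDist x P = dist x p)
    (hattA : ∀ x ∈ X, ∃ a ∈ A, Metric.infDist x A = dist x a)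
    (hpar : ∀ p ∈ P, ∀ a ∈ A, p ≠ a →
      ¬ ∃ u v : E, u ≠ v ∧ segment ℝ u v ⊆ Metric.sphere (0 : E) 1 ∧
        (‖a - p‖⁻¹ • (a - p) = ‖v - u‖⁻¹ • (v - u) ∨
         ‖a - p‖⁻¹ • (a - p) = -(‖v - u‖⁻¹ • (v - u)))) :
    frontier {x : X | Metric.infDist (x : E) P ≤ Metric.infDist (x : E) A} =
        {x : X | Metric.infDist (x : E) P = Metric.infDist (x : E) A} ∧
    interior {x : X | Metric.infDist (x : E) P ≤ Metric.infDist (x : E) A} =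
        {x : X | Metric.infDist (x : E) P < Metric.infDist (x : E) A} := by
  have hcP : Continuous fun x : X => infDist (x : E) P :=
    (continuous_infDist_pt P).comp continuous_subtype_val
  have hcA : Continuous fun x : X => infDist (x : E) A :=
    (continuous_infDist_pt A).comp continuous_subtype_val
  have hbis := setOf_infDist_eq_subset_closure_setOf_infDist_lt hX hAX
    (disjoint_iff_inter_eq_empty.2 hdisj) hattP hattA hpar
  exact ⟨frontier_setOf_le_eq_of_subset_closure hcP hcA hbis,
    interior_setOf_le_eq_of_subset_closure hcP hcA hbis⟩

theorem frontier_and_interior_of_dom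
    {E : Type*} [NormedAddCommGroup E] [NormedSpace ℝ E]
    (X P A : Set E) (hX : Convex ℝ X) (hPX : P ⊆ X) (hAX : A ⊆ X)
    (hP : P.Nonempty) (hA : A.Nonempty) (hdisj : P ∩ A = ∅)
    (hattP : ∀ x ∈ X, ∃ p ∈ P, Metric.infDist x P = dist x p)
    (hattA : ∀ x ∈ X, ∃ a ∈ A, Metric.infDist x A = dist x a)
    (hpar : ∀ p ∈ P, ∀ a ∈ A, p ≠ a →
      ¬ ∃ u v : E, u ≠ v ∧ segment ℝ u v ⊆ Metric.sphere (0 : E) 1 ∧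
        (‖a - p‖⁻¹ • (a - p) = ‖v - u‖⁻¹ • (v - u) ∨
         ‖a - p‖⁻¹ • (a - p) = -(‖v - u‖⁻¹ • (v - u)))) :
    frontier {x : X | Metric.infDist (x : E) P ≤ Metric.infDist (x : E) A} =
        {x : X | Metric.infDist (x : E) P = Metric.infDist (x : E) A} ∧
    interior {x : X | Metric.infDist (x : E) P ≤ Metric.infDist (x : E) A} =
        {x : X | Metric.infDist (x : E) P < Metric.infDist (x : E) A} :=
  frontier_and_interior_of_dom_general X P A hX hAX hdisj hattP hattA hpar
end

section
/- In a convex set X inside a normed space, if P and A are nonempty subsets with the general-position property (no segment between a point of P and a point of A is parallel to a nondegenerate segment in the unit sphere), all distances to P and A attained, and P ∩ A = ∅, then the bisector {x ∈ X : d(x,P) = d(x,A)} has empty interior relative to X (no 'fat bisectors'). -/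
/-!
If `x` were an interior point of the bisector, let `a ∈ A` be nearest to `x`, at distance `r`,
and move from `x` a little towards `a`, to `y`. Then `y` is still on the bisector, so a point
`q ∈ P` nearest to `y` satisfies `d(y, q) = d(y, A) ≤ r - d(x, y)`, while `d(x, q) ≥ r`: the
triangle inequality for `x, y, q` is an equality. Hence the unit vectors in the directions of
`a - x` and `q - y` span a segment of the unit sphere, and their difference is a positive multiple
of `q - a`, against the general position of `P` and `A`.
-/

open Set Metric Filter Topology AffineMap

section

variable {E : Type*} [NormedAddCommGroup E] [NormedSpace ℝ E]

theorem segment_subset_sphere_of_norm_smul_add_smul_eq {u v : E} (hu : ‖u‖ = 1) (hv : ‖v‖ = 1)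
    {a b : ℝ} (ha : 0 < a) (hb : 0 < b) (h : ‖a • u + b • v‖ = a + b) :
    segment ℝ u v ⊆ sphere 0 1 := by
  -- A norming functional of `a • u + b • v` equals `1` at `u` and `v`, hence on the whole
  -- segment, which bounds norms there from below by `1`.
  obtain ⟨f, hf, hfc⟩ := exists_dual_vector ℝ (a • u + b • v) (by rw [h]; positivity)
  have hf_le (w : E) : f w ≤ ‖w‖ := by
    simpa [hf] using (le_abs_self (f w)).trans (f.le_opNorm w)
  have hfc' : a * f u + b * f v = a + b := by simpa [h] using hfc
  have hfu : f u = 1 := by nlinarith [hf_le u, hf_le v]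
  have hfv : f v = 1 := by nlinarith [hf_le u, hf_le v]
  rintro _ ⟨s, s', hs, hs', hss, rfl⟩
  rw [mem_sphere_zero_iff_norm]
  refine le_antisymm ?_ ?_
  · calc ‖s • u + s' • v‖ ≤ ‖s • u‖ + ‖s' • v‖ := norm_add_le _ _
      _ = 1 := by rw [norm_smul, norm_smul, hu, hv, Real.norm_of_nonneg hs,
          Real.norm_of_nonneg hs', mul_one, mul_one, hss]
  · calc 1 = f (s • u + s' • v) := by simp [hfu, hfv, hss]
      _ ≤ ‖s • u + s' • v‖ := hf_le _

theorem exists_sphere_segment_parallel_of_dist_le {x a q : E} {t : ℝ} (ht : t ∈ Ioo 0 1)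
    (hxq : dist x a ≤ dist x q) (hyq : dist (lineMap x a t) q ≤ dist (lineMap x a t) a)
    (hqa : q ≠ a) :
    ∃ u v : E, u ≠ v ∧ segment ℝ u v ⊆ sphere 0 1 ∧
      (‖a - q‖⁻¹ • (a - q) = ‖v - u‖⁻¹ • (v - u) ∨
        ‖a - q‖⁻¹ • (a - q) = -(‖v - u‖⁻¹ • (v - u))) := by
  obtain ⟨ht0, ht1⟩ := ht
  set y := lineMap x a t with hy
  set r := dist x a
  have hxy : dist x y = t * r := by rw [dist_left_lineMap, Real.norm_of_nonneg ht0.le]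
  have hya : dist y a = (1 - t) * r := by
    rw [dist_lineMap_right, Real.norm_of_nonneg (by linarith)]
  have hr : 0 < r := by
    refine dist_pos.2 fun hxa => hqa ?_
    have : dist y q ≤ 0 := by simpa [hya, r, hxa] using hyq
    rw [← dist_le_zero.1 this, hy, hxa, lineMap_same_apply]
  -- Equality in the triangle inequality `dist x q ≤ dist x y + dist y q`.
  have hyq' : dist y q = (1 - t) * r := by
    linarith [dist_triangle x y q]
  have hxq' : dist x q = r := by linarith [dist_triangle x y q]
  set u := r⁻¹ • (a - x)
  set v := ((1 - t) * r)⁻¹ • (q - y)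
  have hs : 0 < (1 - t) * r := mul_pos (by linarith) hr
  have hu : ‖u‖ = 1 := by
    rw [norm_smul, ← dist_eq_norm', norm_inv, Real.norm_of_nonneg hr.le, inv_mul_cancel₀ hr.ne']
  have hv : ‖v‖ = 1 := by
    rw [norm_smul, ← dist_eq_norm', hyq', norm_inv, Real.norm_of_nonneg hs.le,
      inv_mul_cancel₀ hs.ne']
  have hy' : y = t • (a - x) + x := lineMap_apply_module' x a t
  have huv : (t * r) • u + ((1 - t) * r) • v = q - x := by
    simp only [u, v, smul_smul, hy']
    match_scalars <;> field_simp <;> ring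
  have hvu : v - u = ((1 - t) * r)⁻¹ • (q - a) := by
    simp only [u, v, hy']
    match_scalars <;> field_simp <;> ring
  have hqa' : q - a ≠ 0 := sub_ne_zero.2 hqa
  have hvu_ne : v - u ≠ 0 := by rw [hvu]; exact smul_ne_zero (inv_ne_zero hs.ne') hqa'
  refine ⟨u, v, fun h => hvu_ne (sub_eq_zero.2 h.symm),
    segment_subset_sphere_of_norm_smul_add_smul_eq hu hv (mul_pos ht0 hr) hs ?_, Or.inr ?_⟩
  · rw [huv, ← dist_eq_norm', hxq']; ring
  · rw [← neg_sub q a, norm_neg, smul_neg, neg_inj]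
    exact (hvu ▸ SameRay.sameRay_pos_smul_right (q - a) (inv_pos.2 hs)).inv_norm_smul_eq
      hqa' hvu_ne

theorem Convex.exists_lineMap_mem_of_mem_interior {X : Set E} (hX : Convex ℝ X) {S : Set X}
    {x : X} (hx : x ∈ interior S) {z : E} (hz : z ∈ X) :
    ∃ t ∈ Ioo (0 : ℝ) 1, ∃ y ∈ S, (y : E) = lineMap (x : E) z t := by
  obtain ⟨ε, hε, hball⟩ := Metric.mem_nhds_iff.1 (mem_interior_iff_mem_nhds.1 hx)
  have hlim : Tendsto (lineMap (x : E) z) (𝓝[>] (0 : ℝ)) (𝓝 (x : E)) := by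
    simpa using (lineMap_continuous (p := (x : E)) (q := z)).continuousWithinAt
      (s := Ioi (0 : ℝ)) (x := 0) |>.tendsto
  obtain ⟨t, ht, hdist⟩ :=
    Filter.nonempty_of_mem (inter_mem (Ioo_mem_nhdsGT zero_lt_one) (hlim (ball_mem_nhds _ hε)))
  exact ⟨t, ht, ⟨_, hX.lineMap_mem x.2 hz (Ioo_subset_Icc_self ht)⟩, hball hdist, rfl⟩

end

theorem bisector_has_empty_interior_general
    {E : Type*} [NormedAddCommGroup E] [NormedSpace ℝ E]
    (X P A : Set E) (hX : Convex ℝ X) (hAX : A ⊆ X)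
    (hdisj : P ∩ A = ∅)
    (hattP : ∀ x ∈ X, ∃ p ∈ P, Metric.infDist x P = dist x p)
    (hattA : ∀ x ∈ X, ∃ a ∈ A, Metric.infDist x A = dist x a)
    (hpar : ∀ p ∈ P, ∀ a ∈ A, p ≠ a →
      ¬ ∃ u v : E, u ≠ v ∧ segment ℝ u v ⊆ Metric.sphere (0 : E) 1 ∧
        (‖a - p‖⁻¹ • (a - p) = ‖v - u‖⁻¹ • (v - u) ∨
         ‖a - p‖⁻¹ • (a - p) = -(‖v - u‖⁻¹ • (v - u)))) :
    interior {x : X | Metric.infDist (x : E) P = Metric.infDist (x : E) A} = ∅ := by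
  refine eq_empty_iff_forall_notMem.2 fun x hx => ?_
  have hxS : infDist (x : E) P = infDist (x : E) A := interior_subset (a := x) hx
  obtain ⟨a, ha, hxa⟩ := hattA x x.2
  obtain ⟨t, ht, y, hyS, hy⟩ := hX.exists_lineMap_mem_of_mem_interior hx (hAX ha)
  obtain ⟨q, hq, hyq⟩ := hattP y y.2
  have hqa : q ≠ a := fun h => (hdisj ▸ mem_inter hq (h ▸ ha) : q ∈ (∅ : Set E))
  refine hpar q hq a ha hqa (exists_sphere_segment_parallel_of_dist_le (x := (x : E)) ht ?_ ?_ hqa)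
  · rw [← hxa, ← hxS]
    exact infDist_le_dist_of_mem hq
  · rw [← hy, ← hyq, show infDist (y : E) P = infDist (y : E) A from hyS]
    exact infDist_le_dist_of_mem ha

theorem bisector_has_empty_interior
    {E : Type*} [NormedAddCommGroup E] [NormedSpace ℝ E]
    (X P A : Set E) (hX : Convex ℝ X) (hPX : P ⊆ X) (hAX : A ⊆ X)
    (hP : P.Nonempty) (hA : A.Nonempty) (hdisj : P ∩ A = ∅)
    (hattP : ∀ x ∈ X, ∃ p ∈ P, Metric.infDist x P = dist x p)
    (hattA : ∀ x ∈ X, ∃ a ∈ A, Metric.infDist x A = dist x a)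
    (hpar : ∀ p ∈ P, ∀ a ∈ A, p ≠ a →
      ¬ ∃ u v : E, u ≠ v ∧ segment ℝ u v ⊆ Metric.sphere (0 : E) 1 ∧
        (‖a - p‖⁻¹ • (a - p) = ‖v - u‖⁻¹ • (v - u) ∨
         ‖a - p‖⁻¹ • (a - p) = -(‖v - u‖⁻¹ • (v - u)))) :
    interior {x : X | Metric.infDist (x : E) P = Metric.infDist (x : E) A} = ∅ :=
  bisector_has_empty_interior_general X P A hX hAX hdisj hattP hattA hpar
end

section
/- Suppose S ⊆ ℝ^m has a finite face decomposition S = ⋃_{i=1}^{ℓ+1} Fᵢ, where each Fᵢ for i ≤ ℓ is closed, convex, not a singleton, and maximal with respect to line segments in S (if [s,s'] ⊆ S and [s,s''] ⊆ Fᵢ for some s'' strictly between s and s', then [s,s'] ⊆ Fᵢ), and F_{ℓ+1} contains no nondegenerate segment and is disjoint from each Fᵢ, i ≤ ℓ. Then every nondegenerate line segment [s,s'] contained in S is contained in Fᵢ for some i ∈ {1,…,ℓ}. -/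
/-! If no face met `[s, s']` in two points, the faces would cover only finitely many points of
the segment, and a nondegenerate subsegment avoiding them would lie in `G`. So some face contains
two distinct points `x, y` of `[s, s']`, hence `[x, y]` by convexity. Maximality extends `[x, y]`
to the endpoint `e` of `[s, s']` on the side of `y`, and then extends `[e, x]` to the whole
segment. -/

open Set

theorem Set.Finite.exists_Icc_subset_Icc_diff {T : Set ℝ} (hT : T.Finite) {a b : ℝ} (hab : a < b) :
    ∃ c d, c < d ∧ Icc c d ⊆ Icc a b \ T := by
  obtain ⟨x, hx⟩ := ((Ioo_infinite hab).sdiff hT).nonempty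
  have hnhds : Ioo a b \ T ∈ nhds x := (isOpen_Ioo.sdiff hT.isClosed).mem_nhds hx
  obtain ⟨l, hlx, hl⟩ := exists_Ioc_subset_of_mem_nhds hnhds (exists_lt x)
  obtain ⟨c, hlc, hcx⟩ := _root_.exists_between hlx
  exact ⟨c, x, hcx, (Icc_subset_Ioc_left hlc).trans <| hl.trans <|
    sdiff_subset_sdiff_left Ioo_subset_Icc_self⟩

section Segment

variable {E : Type*} [AddCommGroup E] [Module ℝ E]

theorem exists_segment_subset_segment_diff_of_finite {a b : E} (hab : a ≠ b) {T : Set E}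
    (hT : T.Finite) : ∃ x y, x ≠ y ∧ segment ℝ x y ⊆ segment ℝ a b \ T := by
  set f : ℝ →ᵃ[ℝ] E := AffineMap.lineMap a b
  have hf : Function.Injective f := AffineMap.lineMap_injective ℝ hab
  obtain ⟨c, d, hcd, hsub⟩ := (hT.preimage hf.injOn).exists_Icc_subset_Icc_diff zero_lt_one
  refine ⟨f c, f d, hf.ne hcd.ne, ?_⟩
  rw [← image_segment, segment_eq_Icc hcd.le, segment_eq_image_lineMap, ← image_sdiff_preimage]
  exact image_mono hsub

theorem exists_nontrivial_segment_inter_of_subset_iUnion_union {ι : Type*} [Finite ι]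
    {F : ι → Set E} {G : Set E} (hG : ∀ a b : E, a ≠ b → ¬ segment ℝ a b ⊆ G) {a b : E}
    (hab : a ≠ b) (hseg : segment ℝ a b ⊆ (⋃ i, F i) ∪ G) :
    ∃ i, (segment ℝ a b ∩ F i).Nontrivial := by
  by_contra! h
  have hT : (⋃ i, segment ℝ a b ∩ F i).Finite := finite_iUnion fun i ↦ (h i).finite
  obtain ⟨x, y, hxy, hsub⟩ := exists_segment_subset_segment_diff_of_finite hab hT
  refine hG x y hxy fun z hz ↦ ?_
  obtain ⟨hzab, hzT⟩ := hsub hz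
  refine (hseg hzab).resolve_left fun hzF ↦ hzT ?_
  obtain ⟨i, hi⟩ := mem_iUnion.mp hzF
  exact mem_iUnion.mpr ⟨i, hzab, hi⟩

theorem mem_segment_or_mem_segment_of_mem_segment {a b x y : E} (hx : x ∈ segment ℝ a b)
    (hy : y ∈ segment ℝ a b) : y ∈ segment ℝ x a ∨ y ∈ segment ℝ x b := by
  rw [segment_eq_image_lineMap] at hx hy
  obtain ⟨t, ht, rfl⟩ := hx
  obtain ⟨u, hu, rfl⟩ := hy
  rcases le_total u t with hut | htu
  · have hu' : u ∈ segment ℝ t 0 := by rw [segment_symm, segment_eq_Icc ht.1]; exact ⟨hu.1, hut⟩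
    left
    simpa only [image_segment, AffineMap.lineMap_apply_zero] using
      mem_image_of_mem (AffineMap.lineMap a b) hu'
  · have hu' : u ∈ segment ℝ t 1 := by rw [segment_eq_Icc ht.2]; exact ⟨htu, hu.2⟩
    right
    simpa only [image_segment, AffineMap.lineMap_apply_one] using
      mem_image_of_mem (AffineMap.lineMap a b) hu'

def IsSegmentMaximal (S F : Set E) : Prop :=
  ∀ s s' : E, segment ℝ s s' ⊆ S →
    (∃ t ∈ Ioc (0 : ℝ) 1, segment ℝ s (s + t • (s' - s)) ⊆ F) → segment ℝ s s' ⊆ F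

namespace IsSegmentMaximal

variable {S F : Set E} {a b x y : E}

theorem segment_subset_of_segment_subset (h : IsSegmentMaximal S F)
    (hS : segment ℝ a b ⊆ S) (hx : x ∈ segment ℝ a b) (hxa : x ≠ a) (hF : segment ℝ a x ⊆ F) :
    segment ℝ a b ⊆ F := by
  rw [segment_eq_image'] at hx
  obtain ⟨t, ht, rfl⟩ := hx
  have ht0 : t ≠ 0 := by rintro rfl; simp at hxa
  exact h a b hS ⟨t, ⟨lt_of_le_of_ne ht.1 ht0.symm, ht.2⟩, hF⟩

theorem segment_subset_of_mem_of_mem_segment (h : IsSegmentMaximal S F) (hF : Convex ℝ F)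
    (hS : segment ℝ a b ⊆ S) (hx : x ∈ segment ℝ a b) (hxF : x ∈ F) (hy : y ∈ segment ℝ x b)
    (hyF : y ∈ F) (hxy : x ≠ y) : segment ℝ a b ⊆ F := by
  have hxb : segment ℝ x b ⊆ F :=
    h.segment_subset_of_segment_subset
      (((convex_segment a b).segment_subset hx (right_mem_segment ℝ a b)).trans hS) hy hxy.symm
      (hF.segment_subset hxF hyF)
  have hx_ne_b : x ≠ b := by
    rintro rfl
    rw [segment_same, mem_singleton_iff] at hy
    exact hxy hy.symm
  rw [segment_symm] at hS hx hxb ⊢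
  exact h.segment_subset_of_segment_subset hS hx hx_ne_b hxb

theorem segment_subset_of_nontrivial_inter (h : IsSegmentMaximal S F) (hF : Convex ℝ F)
    (hS : segment ℝ a b ⊆ S) (hab : (segment ℝ a b ∩ F).Nontrivial) : segment ℝ a b ⊆ F := by
  obtain ⟨x, ⟨hx, hxF⟩, y, ⟨hy, hyF⟩, hxy⟩ := hab
  rcases mem_segment_or_mem_segment_of_mem_segment hx hy with hya | hyb
  · rw [segment_symm] at hS hx ⊢
    exact h.segment_subset_of_mem_of_mem_segment hF hS hx hxF hya hyF hxy
  · exact h.segment_subset_of_mem_of_mem_segment hF hS hx hxF hyb hyF hxy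

end IsSegmentMaximal

end Segment

theorem segment_in_flat_face_general
    {E : Type*} [NormedAddCommGroup E] [NormedSpace ℝ E]
    (S : Set E) (ℓ : ℕ)
    (F : Fin ℓ → Set E) (G : Set E)
    (hdecomp : S = (⋃ i, F i) ∪ G)
    (hconv : ∀ i, Convex ℝ (F i))
    (hmax : ∀ i, ∀ s s' : E, segment ℝ s s' ⊆ S →
      (∃ t ∈ Set.Ioc (0 : ℝ) 1, segment ℝ s (s + t • (s' - s)) ⊆ F i) →
      segment ℝ s s' ⊆ F i)
    (hGseg : ∀ a b : E, a ≠ b → ¬ segment ℝ a b ⊆ G) :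
    ∀ s s' : E, s ≠ s' → segment ℝ s s' ⊆ S →
      ∃ i : Fin ℓ, segment ℝ s s' ⊆ F i := by
  intro s s' hne hseg
  obtain ⟨i, hi⟩ :=
    exists_nontrivial_segment_inter_of_subset_iUnion_union hGseg hne (hdecomp ▸ hseg)
  exact ⟨i, IsSegmentMaximal.segment_subset_of_nontrivial_inter (hmax i) (hconv i) hseg hi⟩

theorem segment_in_flat_face
    {m : ℕ} {E : Type*} [NormedAddCommGroup E] [NormedSpace ℝ E]
    [FiniteDimensional ℝ E] (hdim : Module.finrank ℝ E = m)
    (S : Set E) (hS : S.Nonempty) (ℓ : ℕ)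
    (F : Fin ℓ → Set E) (G : Set E)
    (hdecomp : S = (⋃ i, F i) ∪ G)
    (hclosed : ∀ i, IsClosed (F i))
    (hconv : ∀ i, Convex ℝ (F i))
    (hsub : ∀ i, F i ⊆ S)
    (hnotpt : ∀ i, ¬ (F i).Subsingleton)
    (hmax : ∀ i, ∀ s s' : E, segment ℝ s s' ⊆ S →
      (∃ t ∈ Set.Ioc (0 : ℝ) 1, segment ℝ s (s + t • (s' - s)) ⊆ F i) →
      segment ℝ s s' ⊆ F i)
    (hGseg : ∀ a b : E, a ≠ b → ¬ segment ℝ a b ⊆ G)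
    (hGdisj : ∀ i, G ∩ F i = ∅) :
    ∀ s s' : E, s ≠ s' → segment ℝ s s' ⊆ S →
      ∃ i : Fin ℓ, segment ℝ s s' ⊆ F i :=
  segment_in_flat_face_general S ℓ F G hdecomp hconv hmax hGseg
end

section
/- The unit sphere of the 'cylinder with covers' norm does not have a finite face decomposition: the set S = {(x₁,x₂,x₃) ∈ ℝ³ : x₁² + x₂² = 1, x₃ ∈ [−1,1]} cannot be written as a finite face decomposition, since it contains infinitely many maximal line segments (the vertical segments {(cos α, sin α)} × [−1,1] for all α), each of which would have to be a distinct flat face. -/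
/-- The lateral surface of the cylinder with covers: the "cylinder" unit sphere. -/
def cylinderSphere : Set (ℝ × ℝ × ℝ) :=
  {p : ℝ × ℝ × ℝ | p.1 ^ 2 + p.2.1 ^ 2 = 1 ∧ p.2.2 ∈ Set.Icc (-1 : ℝ) 1}

theorem cylinder_no_finite_face_decomposition :
    ¬ ∃ (ℓ : ℕ) (F : Fin ℓ → Set (ℝ × ℝ × ℝ)) (G : Set (ℝ × ℝ × ℝ)),
      cylinderSphere = (⋃ i, F i) ∪ G ∧
      (∀ i, IsClosed (F i)) ∧
      (∀ i, Convex ℝ (F i)) ∧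
      (∀ i, F i ⊆ cylinderSphere) ∧
      (∀ i, ¬ (F i).Subsingleton) ∧
      (∀ i, ∀ s s' : ℝ × ℝ × ℝ, segment ℝ s s' ⊆ cylinderSphere →
        (∃ t ∈ Set.Ioc (0 : ℝ) 1, segment ℝ s (s + t • (s' - s)) ⊆ F i) →
        segment ℝ s s' ⊆ F i) ∧
      (∀ a b : ℝ × ℝ × ℝ, a ≠ b → ¬ segment ℝ a b ⊆ G) ∧
      (∀ i, G ∩ F i = ∅) := by
  classical
  rintro ⟨ℓ, F, G, hcover, -, hconv, hFsub, -, -, hG, -⟩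
  have hp : (0:ℝ) < (ℓ:ℝ) + 1 := by positivity
  -- Step 1: any two points of a convex face have the same first coordinate.
  have hvert : ∀ i, ∀ p ∈ F i, ∀ q ∈ F i, p.1 = q.1 := by
    intro i p hp' q hq
    have hm : ((1/2:ℝ) • p + (1/2:ℝ) • q) ∈ F i :=
      hconv i hp' hq (by norm_num) (by norm_num) (by norm_num)
    have h1 := (hFsub i hp').1
    have h2 := (hFsub i hq).1
    have h3 := (hFsub i hm).1
    simp only [Prod.fst_add, Prod.smul_fst, Prod.snd_add, Prod.smul_snd,
      smul_eq_mul] at h3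
    nlinarith [sq_nonneg (p.1 - q.1), sq_nonneg (p.2.1 - q.2.1)]
  -- Step 2: every vertical line of the cylinder meets some face in two points.
  have hline : ∀ x y : ℝ, x ^ 2 + y ^ 2 = 1 →
      ∃ i z z', ((x, y, z) : ℝ × ℝ × ℝ) ∈ F i ∧
        ((x, y, z') : ℝ × ℝ × ℝ) ∈ F i ∧ z ≠ z' := by
    intro x y hxy
    by_contra hcon
    push_neg at hcon
    set zf : Fin ℓ → ℝ := fun i =>
      if h : ∃ w, ((x, y, w) : ℝ × ℝ × ℝ) ∈ F i then h.choose else 2 with hzf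
    have hzf_spec : ∀ i z, ((x, y, z) : ℝ × ℝ × ℝ) ∈ F i → z = zf i := by
      intro i z hz
      have hex : ∃ w, ((x, y, w) : ℝ × ℝ × ℝ) ∈ F i := ⟨z, hz⟩
      have h1 : zf i = hex.choose := by simp [hzf, dif_pos hex]
      rw [h1]
      exact hcon i z hex.choose hz hex.choose_spec
    -- pigeonhole: some open subinterval avoids all zf i
    have hexk : ∃ k : Fin (ℓ + 1), ∀ i,
        zf i ∉ Set.Ioo ((k : ℝ) / ((ℓ:ℝ) + 1)) (((k : ℝ) + 1) / ((ℓ:ℝ) + 1)) := by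
      by_contra hk
      push_neg at hk
      choose ψ hψ using hk
      have hinj : Function.Injective ψ := by
        intro k k' hkk'
        have h1 := hψ k
        have h2 := hψ k'
        rw [hkk'] at h1
        have a1 : (k : ℝ) < (k' : ℝ) + 1 :=
          (div_lt_div_iff_of_pos_right hp).mp (lt_trans h1.1 h2.2)
        have a2 : (k' : ℝ) < (k : ℝ) + 1 :=
          (div_lt_div_iff_of_pos_right hp).mp (lt_trans h2.1 h1.2)
        have b1 : (k : ℕ) < (k' : ℕ) + 1 := by exact_mod_cast a1
        have b2 : (k' : ℕ) < (k : ℕ) + 1 := by exact_mod_cast a2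
        exact Fin.ext (by omega)
      have := Fintype.card_le_of_injective ψ hinj
      simp [Fintype.card_fin] at this
    obtain ⟨k, hk⟩ := hexk
    set a : ℝ := ((k : ℝ) + 1/4) / ((ℓ:ℝ) + 1) with ha
    set b : ℝ := ((k : ℝ) + 3/4) / ((ℓ:ℝ) + 1) with hb
    have hab : a < b := (div_lt_div_iff_of_pos_right hp).mpr (by linarith)
    have hsubJ : Set.Icc a b ⊆
        Set.Ioo ((k : ℝ) / ((ℓ:ℝ) + 1)) (((k : ℝ) + 1) / ((ℓ:ℝ) + 1)) := by
      intro z hz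
      constructor
      · exact lt_of_lt_of_le ((div_lt_div_iff_of_pos_right hp).mpr (by linarith)) hz.1
      · exact lt_of_le_of_lt hz.2 ((div_lt_div_iff_of_pos_right hp).mpr (by linarith))
    have hkle : (k : ℝ) ≤ (ℓ : ℝ) := by
      have : (k : ℕ) ≤ ℓ := Nat.lt_succ_iff.mp k.isLt
      exact_mod_cast this
    have hIcc : Set.Icc a b ⊆ Set.Icc (-1 : ℝ) 1 := by
      intro z hz
      have h0a : (0:ℝ) ≤ a := by positivity
      have hb1 : b ≤ 1 := by
        rw [hb, div_le_one hp]; linarith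
      exact ⟨by linarith [hz.1], le_trans hz.2 hb1⟩
    have hseg : segment ℝ ((x, y, a) : ℝ × ℝ × ℝ) (x, y, b) ⊆ G := by
      rintro w ⟨u, v, hu, hv, huv, hw⟩
      have hw1 : w = (x, y, u * a + v * b) := by
        rw [← hw]
        have : u • ((x, y, a) : ℝ × ℝ × ℝ) + v • ((x, y, b) : ℝ × ℝ × ℝ) =
            (u * x + v * x, u * y + v * y, u * a + v * b) := rfl
        rw [this]
        refine Prod.ext ?_ (Prod.ext ?_ rfl)
        · show u * x + v * x = x; linear_combination x * huv
        · show u * y + v * y = y; linear_combination y * huv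
      set z := u * a + v * b with hzdef
      have hzeq : z = a + v * (b - a) := by rw [hzdef]; linear_combination a * huv
      have hzeq' : z = b - u * (b - a) := by rw [hzdef]; linear_combination b * huv
      have hz : z ∈ Set.Icc a b := by
        constructor
        · rw [hzeq]; nlinarith [mul_nonneg hv (sub_nonneg.mpr hab.le)]
        · rw [hzeq']; nlinarith [mul_nonneg hu (sub_nonneg.mpr hab.le)]
      have hS : ((x, y, z) : ℝ × ℝ × ℝ) ∈ cylinderSphere := ⟨hxy, hIcc hz⟩
      rw [hcover] at hS
      rcases hS with hS | hS
      · rw [Set.mem_iUnion] at hS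
        obtain ⟨i, hzi⟩ := hS
        exact absurd (hsubJ ((hzf_spec i z hzi) ▸ hz)) (hk i)
      · rw [hw1]; exact hS
    refine hG (x, y, a) (x, y, b) ?_ hseg
    intro h
    exact hab.ne (congrArg (fun p : ℝ × ℝ × ℝ => p.2.2) h)
  -- Step 3: build an injection Fin (ℓ+1) → Fin ℓ.
  have hptx : ∀ j : Fin (ℓ + 1),
      ((j : ℝ) / ((ℓ:ℝ) + 1)) ^ 2 +
        (Real.sqrt (1 - ((j : ℝ) / ((ℓ:ℝ) + 1)) ^ 2)) ^ 2 = 1 := by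
    intro j
    have hjle : (j : ℝ) ≤ (ℓ : ℝ) := by
      have : (j : ℕ) ≤ ℓ := Nat.lt_succ_iff.mp j.isLt
      exact_mod_cast this
    have h1 : (j : ℝ) / ((ℓ:ℝ) + 1) ≤ 1 := by
      rw [div_le_one hp]; linarith
    have h0 : (0:ℝ) ≤ (j : ℝ) / ((ℓ:ℝ) + 1) := by positivity
    have hnn : 0 ≤ 1 - ((j : ℝ) / ((ℓ:ℝ) + 1)) ^ 2 := by nlinarith
    rw [Real.sq_sqrt hnn]; ring
  choose φ z z' h1 h2 hzz' using fun j : Fin (ℓ + 1) => hline _ _ (hptx j)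
  have hφinj : Function.Injective φ := by
    intro j j' hjj'
    have hvv := hvert (φ j) _ (h1 j) _ (hjj' ▸ h1 j')
    simp only at hvv
    field_simp at hvv
    exact Fin.ext (by exact_mod_cast hvv)
  have hcard := Fintype.card_le_of_injective φ hφinj
  simp [Fintype.card_fin] at hcard
end

section
/- Let (ℝ^m, ‖·‖) be a normed space whose unit sphere has a finite face decomposition, and P, A nonempty compact subsets with d(P,A) > 0 such that no segment [p,a] (p ∈ P, a ∈ A) is parallel to a nondegenerate line segment contained in the unit sphere. Then the directional distance is uniformly bounded away from parallelism: d(Ŵ(P,A), Ŝ) > 0, where Ŵ(P,A) = {±(a−p)/‖a−p‖ : p∈P, a∈A} and Ŝ = {(s'−s)/‖s'−s‖ : [s,s'] ⊆ unit sphere, s ≠ s'}. -/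
open Set Metric
open scoped Pointwise

theorem disjoint_of_setDist_pos {E : Type*} [NormedAddCommGroup E] {P A : Set E}
    (hd : 0 < setDist P A) : Disjoint P A := by
  refine disjoint_left.mpr fun p hpP hpA => hd.not_ge ?_
  calc setDist P A ≤ dist p p :=
        csInf_le ⟨0, forall_mem_image2.mpr fun _ _ _ _ => dist_nonneg⟩ (mem_image2_of_mem hpP hpA)
    _ = 0 := dist_self p

theorem Convex.exists_pos_smul_mem_of_mem_span {E : Type*} [AddCommGroup E] [Module ℝ E]
    {C : Set E} (hC : Convex ℝ C) (hneg : ∀ x ∈ C, -x ∈ C) (hne : C.Nonempty) {x : E}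
    (hx : x ∈ Submodule.span ℝ C) : ∃ t : ℝ, 0 < t ∧ t • x ∈ C := by
  have mem_hull : ∀ {y : E}, y ∈ ConvexCone.hull ℝ C ↔ ∃ t : ℝ, 0 < t ∧ t • y ∈ C := by
    intro y
    rw [ConvexCone.mem_hull_of_convex hC]
    constructor
    · rintro ⟨r, hr, hy⟩
      exact ⟨r⁻¹, inv_pos.mpr hr, (mem_smul_set_iff_inv_smul_mem₀ hr.ne' _ _).mp hy⟩
    · rintro ⟨t, ht, hy⟩
      refine ⟨t⁻¹, inv_pos.mpr ht, (mem_smul_set_iff_inv_smul_mem₀ (inv_ne_zero ht.ne') _ _).mpr ?_⟩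
      rwa [inv_inv]
  have zero_mem : (0 : E) ∈ C := by
    obtain ⟨c, hc⟩ := hne
    simpa using hC.midpoint_mem hc (hneg c hc)
  have neg_mem_hull : ∀ y ∈ ConvexCone.hull ℝ C, -y ∈ ConvexCone.hull ℝ C := by
    intro y hy
    obtain ⟨t, ht, hty⟩ := mem_hull.mp hy
    exact mem_hull.mpr ⟨t, ht, by simpa using hneg _ hty⟩
  -- A symmetric convex cone containing `0` is a subspace, hence contains `span ℝ C`.
  rw [← mem_hull]
  induction hx using Submodule.span_induction with
  | mem y hy => exact ConvexCone.subset_hull hy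
  | zero => exact mem_hull.mpr ⟨1, one_pos, by simpa using zero_mem⟩
  | add y z _ _ hy hz => exact (ConvexCone.hull ℝ C).add_mem hy hz
  | smul a y _ hy =>
    rcases lt_trichotomy a 0 with ha | rfl | ha
    · simpa using (ConvexCone.hull ℝ C).smul_mem (neg_pos.mpr ha) (neg_mem_hull y hy)
    · exact mem_hull.mpr ⟨1, one_pos, by simpa using zero_mem⟩
    · exact (ConvexCone.hull ℝ C).smul_mem ha hy

section Directions

variable {E : Type*} [NormedAddCommGroup E] [NormedSpace ℝ E]

def segmentDirections (K : Set E) : Set E :=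
  {θ | ∃ s s' : E, s ≠ s' ∧ segment ℝ s s' ⊆ K ∧ θ = ‖s' - s‖⁻¹ • (s' - s)}

def connectingDirections (P A : Set E) : Set E :=
  image2 (fun p a => ‖a - p‖⁻¹ • (a - p)) P A

theorem exists_ne_segment_subset_segment_diff {x y : E} (hxy : x ≠ y) {T : Set E}
    (hT : T.Finite) : ∃ a b : E, a ≠ b ∧ segment ℝ a b ⊆ segment ℝ x y \ T := by
  set γ : ℝ →ᵃ[ℝ] E := AffineMap.lineMap x y
  have hγ : Function.Injective γ := AffineMap.lineMap_injective ℝ hxy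
  have hS : (γ ⁻¹' T).Finite := hT.preimage hγ.injOn
  obtain ⟨c, d, hcd, hsub⟩ := (isOpen_Ioo.sdiff hS.isClosed).exists_Ioo_subset
    ((Ioo_infinite (zero_lt_one' ℝ)).sdiff hS).nonempty
  have hIcc : Icc ((2 * c + d) / 3) ((c + 2 * d) / 3) ⊆ Ioo c d :=
    Icc_subset_Ioo (by linarith) (by linarith)
  refine ⟨γ ((2 * c + d) / 3), γ ((c + 2 * d) / 3), hγ.ne (by linarith), ?_⟩
  rw [← image_segment, segment_eq_Icc (by linarith), segment_eq_image_lineMap]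
  rintro _ ⟨t, ht, rfl⟩
  obtain ⟨⟨ht0, ht1⟩, htT⟩ := hsub (hIcc ht)
  exact ⟨mem_image_of_mem _ ⟨ht0.le, ht1.le⟩, htT⟩

theorem exists_ne_mem_segment_inter_of_segment_subset {ι : Type*} [Finite ι] {F : ι → Set E}
    {G : Set E} (hG : ∀ a b : E, a ≠ b → ¬ segment ℝ a b ⊆ G) {x y : E} (hxy : x ≠ y)
    (hcover : segment ℝ x y ⊆ (⋃ i, F i) ∪ G) :
    ∃ i, ∃ a ∈ segment ℝ x y ∩ F i, ∃ b ∈ segment ℝ x y ∩ F i, a ≠ b := by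
  by_contra! hsing
  have hfin : (⋃ i, segment ℝ x y ∩ F i).Finite :=
    finite_iUnion fun i =>
      (show (segment ℝ x y ∩ F i).Subsingleton from fun a ha b hb => hsing i a ha b hb).finite
  obtain ⟨a, b, hab, hsub⟩ := exists_ne_segment_subset_segment_diff hxy hfin
  refine hG a b hab fun z hz => ?_
  obtain ⟨hzxy, hzF⟩ := hsub hz
  rcases hcover hzxy with hz' | hz'
  · obtain ⟨i, hi⟩ := mem_iUnion.mp hz'
    exact (hzF (mem_iUnion_of_mem i ⟨hzxy, hi⟩)).elim
  · exact hz'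

theorem sub_mem_vectorSpan_of_mem_segment_inter {F : Set E} {x y a b : E}
    (ha : a ∈ segment ℝ x y ∩ F) (hb : b ∈ segment ℝ x y ∩ F) (hab : a ≠ b) :
    y - x ∈ vectorSpan ℝ F := by
  have hba : b - a ∈ ℝ ∙ (y - x) := by
    rw [← vsub_eq_sub y x, ← vectorSpan_segment]
    exact vsub_mem_vectorSpan ℝ hb.1 ha.1
  obtain ⟨c, hc⟩ := Submodule.mem_span_singleton.mp hba
  have hc0 : c ≠ 0 := by
    rintro rfl
    rw [zero_smul, eq_comm, sub_eq_zero] at hc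
    exact hab hc.symm
  have := (vectorSpan ℝ F).smul_mem c⁻¹ (vsub_mem_vectorSpan ℝ hb.2 ha.2)
  rwa [vsub_eq_sub, ← hc, smul_smul, inv_mul_cancel₀ hc0, one_smul] at this

theorem segmentDirections_subset_iUnion {ι : Type*} [Finite ι] {K G : Set E} {F : ι → Set E}
    (hK : K ⊆ (⋃ i, F i) ∪ G) (hG : ∀ a b : E, a ≠ b → ¬ segment ℝ a b ⊆ G) :
    segmentDirections K ⊆ ⋃ i, sphere 0 1 ∩ vectorSpan ℝ (F i) := by
  rintro θ ⟨s, s', hne, hseg, rfl⟩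
  obtain ⟨i, a, ha, b, hb, hab⟩ :=
    exists_ne_mem_segment_inter_of_segment_subset hG hne (hseg.trans hK)
  refine mem_iUnion_of_mem i ⟨?_, Submodule.smul_mem _ _
    (sub_mem_vectorSpan_of_mem_segment_inter ha hb hab)⟩
  exact mem_sphere_zero_iff_norm.mpr (norm_smul_inv_norm (sub_ne_zero.mpr hne.symm))

theorem sphere_inter_vectorSpan_subset_segmentDirections {F K : Set E} (hF : Convex ℝ F)
    (hFK : F ⊆ K) : sphere 0 1 ∩ vectorSpan ℝ F ⊆ segmentDirections K := by
  rintro θ ⟨hθ1, hθF⟩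
  rw [mem_sphere_zero_iff_norm] at hθ1
  have hθ0 : θ ≠ 0 := ne_zero_of_norm_ne_zero (by rw [hθ1]; exact one_ne_zero)
  have hFne : F.Nonempty := by
    rw [nonempty_iff_ne_empty]
    rintro rfl
    rw [vectorSpan_empty, SetLike.mem_coe, Submodule.mem_bot] at hθF
    exact hθ0 hθF
  obtain ⟨t, ht, v, hv, u, hu, huv⟩ := (hF.sub hF).exists_pos_smul_mem_of_mem_span
    (by rintro _ ⟨v, hv, u, hu, rfl⟩; exact ⟨u, hu, v, hv, (neg_sub v u).symm⟩)
    (hFne.sub hFne) hθF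
  replace huv : v - u = t • θ := huv
  have hnorm : ‖v - u‖ = t := by rw [huv, norm_smul, hθ1, mul_one, Real.norm_of_nonneg ht.le]
  refine ⟨u, v, fun h => hθ0 ?_, (hF.segment_subset hu hv).trans hFK, ?_⟩
  · rwa [h, sub_self, eq_comm, smul_eq_zero, or_iff_right ht.ne'] at huv
  · rw [hnorm, huv, inv_smul_smul₀ ht.ne']

theorem isClosed_segmentDirections [FiniteDimensional ℝ E] {ι : Type*} [Finite ι] {K G : Set E}
    {F : ι → Set E} (hK : K = (⋃ i, F i) ∪ G) (hF : ∀ i, Convex ℝ (F i))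
    (hG : ∀ a b : E, a ≠ b → ¬ segment ℝ a b ⊆ G) : IsClosed (segmentDirections K) := by
  have hFK : ∀ i, F i ⊆ K := fun i => hK ▸ subset_union_of_subset_left (subset_iUnion F i) G
  rw [(segmentDirections_subset_iUnion hK.le hG).antisymm
    (iUnion_subset fun i => sphere_inter_vectorSpan_subset_segmentDirections (hF i) (hFK i))]
  exact isClosed_iUnion_of_finite fun i =>
    isClosed_sphere.inter (vectorSpan ℝ (F i)).closed_of_finiteDimensional

theorem isCompact_connectingDirections {P A : Set E} (hP : IsCompact P) (hA : IsCompact A)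
    (hPA : Disjoint P A) : IsCompact (connectingDirections P A) := by
  rw [connectingDirections, ← image_prod]
  refine (hP.prod hA).image_of_continuousOn (ContinuousOn.smul (ContinuousOn.inv₀
    (by fun_prop) fun q hq => ?_) (by fun_prop))
  exact norm_ne_zero_iff.mpr (sub_ne_zero.mpr (hPA.ne_of_mem hq.1 hq.2).symm)

end Directions

theorem directions_uniformly_far_from_sphere_directions_general
    {E : Type*} [NormedAddCommGroup E] [NormedSpace ℝ E]
    [FiniteDimensional ℝ E]
    -- finite face decomposition of the unit sphere
    (ℓ : ℕ) (F : Fin ℓ → Set E) (G : Set E)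
    (hdecomp : Metric.sphere (0 : E) 1 = (⋃ i, F i) ∪ G)
    (hconv : ∀ i, Convex ℝ (F i))
    (hGseg : ∀ a b : E, a ≠ b → ¬ segment ℝ a b ⊆ G)
    -- the sites
    (P A : Set E)
    (hPc : IsCompact P) (hAc : IsCompact A) (hd : 0 < setDist P A)
    -- general position: no connecting direction is a direction of a sphere segment
    (hpar : {θ : E | ∃ p ∈ P, ∃ a ∈ A,
          (θ = ‖a - p‖⁻¹ • (a - p) ∨ θ = ‖p - a‖⁻¹ • (p - a))} ∩
        {θ : E | ∃ s s' : E, s ≠ s' ∧ segment ℝ s s' ⊆ Metric.sphere (0 : E) 1 ∧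
          θ = ‖s' - s‖⁻¹ • (s' - s)} = ∅) :
    ∃ r : ℝ, 0 < r ∧
      ∀ w ∈ {θ : E | ∃ p ∈ P, ∃ a ∈ A,
          (θ = ‖a - p‖⁻¹ • (a - p) ∨ θ = ‖p - a‖⁻¹ • (p - a))},
      ∀ s ∈ {θ : E | ∃ s s' : E, s ≠ s' ∧ segment ℝ s s' ⊆ Metric.sphere (0 : E) 1 ∧
          θ = ‖s' - s‖⁻¹ • (s' - s)},
        r ≤ ‖w - s‖ := by
  have hdirs : {θ : E | ∃ p ∈ P, ∃ a ∈ A,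
      (θ = ‖a - p‖⁻¹ • (a - p) ∨ θ = ‖p - a‖⁻¹ • (p - a))} =
      connectingDirections P A ∪ connectingDirections A P := by
    ext θ
    simp only [connectingDirections, mem_union, mem_image2]
    aesop
  have hPA : Disjoint P A := disjoint_of_setDist_pos hd
  have hW : IsCompact (connectingDirections P A ∪ connectingDirections A P) :=
    (isCompact_connectingDirections hPc hAc hPA).union
      (isCompact_connectingDirections hAc hPc hPA.symm)
  have hS : IsClosed (segmentDirections (sphere (0 : E) 1)) :=
    isClosed_segmentDirections hdecomp hconv hGseg
  rw [hdirs] at hpar ⊢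
  obtain ⟨r, hr, hsep⟩ := exists_pos_forall_lt_edist hW hS (disjoint_iff_inter_eq_empty.mpr hpar)
  refine ⟨r, hr, fun w hw s hs => ?_⟩
  have hrws := hsep w hw s hs
  rw [edist_nndist, ENNReal.coe_lt_coe, ← NNReal.coe_lt_coe, coe_nndist, dist_eq_norm] at hrws
  exact hrws.le

theorem directions_uniformly_far_from_sphere_directions
    {m : ℕ} {E : Type*} [NormedAddCommGroup E] [NormedSpace ℝ E]
    [FiniteDimensional ℝ E] (hdim : Module.finrank ℝ E = m)
    -- finite face decomposition of the unit sphere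
    (ℓ : ℕ) (F : Fin ℓ → Set E) (G : Set E)
    (hdecomp : Metric.sphere (0 : E) 1 = (⋃ i, F i) ∪ G)
    (hclosed : ∀ i, IsClosed (F i))
    (hconv : ∀ i, Convex ℝ (F i))
    (hsub : ∀ i, F i ⊆ Metric.sphere (0 : E) 1)
    (hnotpt : ∀ i, ¬ (F i).Subsingleton)
    (hmax : ∀ i, ∀ s s' : E, segment ℝ s s' ⊆ Metric.sphere (0 : E) 1 →
      (∃ t ∈ Set.Ioc (0 : ℝ) 1, segment ℝ s (s + t • (s' - s)) ⊆ F i) →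
      segment ℝ s s' ⊆ F i)
    (hGseg : ∀ a b : E, a ≠ b → ¬ segment ℝ a b ⊆ G)
    (hGdisj : ∀ i, G ∩ F i = ∅)
    -- the sites
    (P A : Set E) (hP : P.Nonempty) (hA : A.Nonempty)
    (hPc : IsCompact P) (hAc : IsCompact A) (hd : 0 < setDist P A)
    -- general position: no connecting direction is a direction of a sphere segment
    (hpar : {θ : E | ∃ p ∈ P, ∃ a ∈ A,
          (θ = ‖a - p‖⁻¹ • (a - p) ∨ θ = ‖p - a‖⁻¹ • (p - a))} ∩
        {θ : E | ∃ s s' : E, s ≠ s' ∧ segment ℝ s s' ⊆ Metric.sphere (0 : E) 1 ∧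
          θ = ‖s' - s‖⁻¹ • (s' - s)} = ∅) :
    ∃ r : ℝ, 0 < r ∧
      ∀ w ∈ {θ : E | ∃ p ∈ P, ∃ a ∈ A,
          (θ = ‖a - p‖⁻¹ • (a - p) ∨ θ = ‖p - a‖⁻¹ • (p - a))},
      ∀ s ∈ {θ : E | ∃ s s' : E, s ≠ s' ∧ segment ℝ s s' ⊆ Metric.sphere (0 : E) 1 ∧
          θ = ‖s' - s‖⁻¹ • (s' - s)},
        r ≤ ‖w - s‖ :=
  directions_uniformly_far_from_sphere_directions_general ℓ F G hdecomp hconv hGseg P A hPc hAc hd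
    hpar
end
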